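/- Let m ≥ 2 be an integer and set α_m = 1 − 1/m. There exists a constant C_m > 0 such that for every integer k ≥ 2: Λ_m^{α_m}(k) ≥ C_m · k^{m−1} · log k, equivalently Ξ_m^{α_m}(k) ≥ C_m · log k. -/

import Mathlib

open scoped ENNReal
open scoped Classical

noncomputable section

/-- Points of `ℝ^m` with the Euclidean norm. -/
abbrev Pt (m : ℕ) : Type := EuclideanSpace ℝ (Fin m)

/-- A finite weighted directed graph in `ℝ^m`: a finite vertex set, a finite set of
directed segments `e = (e⁻, e⁺)`, and a multiplicity function. -/
structure BrGraph (m : ℕ) where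
  V : Finset (Pt m)
  E : Finset (Pt m × Pt m)
  d : Pt m × Pt m → ℕ

/-- `G` is a weighted directed graph connecting the finite set `A` to the boundary of `Ω`:
`A ⊆ V(G) ⊆ cl Ω`; edges have distinct endpoints in `V(G)`; no edge appears with both
orientations; multiplicities are `≥ 1`; and the Kirchhoff balance law holds at every
vertex not on `∂Ω`. -/
def BrGraph.IsConn {m : ℕ} (G : BrGraph m) (A : Finset (Pt m)) (Ω : Set (Pt m)) : Prop :=
  A ⊆ G.V ∧
  (G.V : Set (Pt m)) ⊆ closure Ω ∧
  (∀ e ∈ G.E, e.1 ∈ G.V ∧ e.2 ∈ G.V ∧ e.1 ≠ e.2) ∧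
  (∀ e ∈ G.E, (e.2, e.1) ∉ G.E) ∧
  (∀ e ∈ G.E, 1 ≤ G.d e) ∧
  ∀ a ∈ G.V, a ∉ frontier Ω →
    (∑ e ∈ G.E.filter (fun e => e.1 = a), G.d e) =
      (∑ e ∈ G.E.filter (fun e => e.2 = a), G.d e) + (if a ∈ A then 1 else 0)

/-- The cost `W_α(G) = ∑_{e ∈ E(G)} d(e)^α · ℓ(e)` where `ℓ(e) = |e⁺ − e⁻|`. -/
def BrGraph.cost {m : ℕ} (α : ℝ) (G : BrGraph m) : ℝ :=
  ∑ e ∈ G.E, (G.d e : ℝ) ^ α * ‖e.2 - e.1‖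

/-- The branched connection `ℒ^α_brbd(A, ∂Ω) = inf { W_α(G) : G ∈ 𝒢(A, ∂Ω) }`
(valued in `[0, ∞]`, equal to `∞` if no connecting graph exists). -/
def Lbrbd (m : ℕ) (α : ℝ) (A : Finset (Pt m)) (Ω : Set (Pt m)) : ℝ≥0∞ :=
  ⨅ (G : BrGraph m) (_ : G.IsConn A Ω), ENNReal.ofReal (G.cost α)

/-- The open unit cube `(0,1)^m ⊆ ℝ^m`. -/
def unitCube (m : ℕ) : Set (Pt m) := {x | ∀ j, x j ∈ Set.Ioo (0 : ℝ) 1}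

/-- The uniform grid `A_m^k = { (i₁/k, …, i_m/k) : i₁, …, i_m ∈ {1, …, k} }` of `k^m`
points. -/
def gridA (m k : ℕ) : Finset (Pt m) :=
  (Fintype.piFinset fun _ : Fin m => Finset.Icc 1 k).image
    fun I => (WithLp.equiv 2 (Fin m → ℝ)).symm fun j => (I j : ℝ) / k

/-- `Λ_m^α(k) = ℒ^α_brbd(A_m^k, ∂(0,1)^m)`. -/
def LamGrid (m : ℕ) (α : ℝ) (k : ℕ) : ℝ≥0∞ := Lbrbd m α (gridA m k) (unitCube m)

/-- `Ξ_m^α(k) = k^{−mα} · Λ_m^α(k)`. -/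
def XiGrid (m : ℕ) (α : ℝ) (k : ℕ) : ℝ≥0∞ :=
  ENNReal.ofReal ((k : ℝ) ^ (-((m : ℝ) * α))) * LamGrid m α k

/-!
Let `C` be the `≈ (k/4)^m` grid points with all coordinates in `[1/4, 3/4]`. Decomposing the flow
of a connecting graph `G` and erasing loops gives, for every `a ∈ C`, a simple path from `a` to the
boundary, with at most `d(e)` paths through each edge `e`. For each of the `log₂ k` scales `2⁻ʲ`
with `4 ≤ 2ʲ ≤ 2k`, the ramp `x ↦ ramp j ‖x - a‖`, rising from `2⁻ʲ⁻¹` to `2⁻ʲ`, varies by `2⁻ʲ⁻¹`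
along the path of `a`. On an edge of length `ℓ` and multiplicity `d`, these variations add up to at
most `d ℓ` over all scales, while at scale `j` only the `≲ (k 2⁻ʲ)^m` centres near the edge
contribute, at most `ℓ` each. Weighting scale `j` by `(k 2⁻ʲ)⁻¹`, the scales with
`k 2⁻ʲ ≤ d^(1/m)` contribute `≲ d^(1 - 1/m) ℓ` by geometric decay, and the others at most
`d^(-1/m) · d ℓ`. Summing over the edges, `#C · log₂ k / k ≲ W_α(G)`.
-/

namespace BranchedTransport

open Finset

section Walks

variable {α : Type*}

@[simp] lemma consecutivePairs_cons_cons (x y : α) (t : List α) :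
    (x :: y :: t).consecutivePairs = (x, y) :: (y :: t).consecutivePairs := rfl

@[simp] lemma consecutivePairs_singleton (x : α) : [x].consecutivePairs = [] := rfl

lemma consecutivePairs_subset_cons (x : α) (L : List α) :
    L.consecutivePairs ⊆ (x :: L).consecutivePairs := by
  cases L with
  | nil => simp
  | cons y t => simp

lemma consecutivePairs_subset_append (s L : List α) :
    L.consecutivePairs ⊆ (s ++ L).consecutivePairs := by
  induction s with
  | nil => simp
  | cons x s ih => exact List.Subset.trans ih (consecutivePairs_subset_cons x _)

lemma nodup_consecutivePairs {L : List α} (hL : L.Nodup) : L.consecutivePairs.Nodup := by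
  induction L with
  | nil => simp
  | cons x t ih =>
    cases t with
    | nil => simp
    | cons y u =>
      rw [consecutivePairs_cons_cons]
      refine List.nodup_cons.2 ⟨fun hmem => (List.nodup_cons.1 hL).1 ?_, ih hL.of_cons⟩
      simpa using List.of_mem_zip hmem |>.1

/-- Loop erasure. -/
lemma exists_nodup_consecutivePairs_subset (a : α) (t : List α) :
    ∃ t', (a :: t').Nodup ∧ (a :: t').getLast (List.cons_ne_nil a t') =
      (a :: t).getLast (List.cons_ne_nil a t) ∧
      (a :: t').consecutivePairs ⊆ (a :: t).consecutivePairs := by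
  induction t generalizing a with
  | nil => exact ⟨[], by simp⟩
  | cons y u ih =>
    obtain ⟨u', hnd, hlast, hsub⟩ := ih y
    by_cases ha : a ∈ y :: u'
    · obtain ⟨s, w, hsw⟩ := List.append_of_mem ha
      refine ⟨w, ?_, ?_, ?_⟩
      · exact hnd.sublist (hsw ▸ List.sublist_append_right s (a :: w))
      · rw [List.getLast_cons_cons, ← hlast]
        simp only [hsw, List.getLast_append_of_ne_nil _ (List.cons_ne_nil a w)]
      · refine List.Subset.trans (consecutivePairs_subset_append s _) ?_
        rw [← hsw]
        exact List.Subset.trans hsub (consecutivePairs_subset_cons a _)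
    · refine ⟨y :: u', List.nodup_cons.2 ⟨ha, hnd⟩, by simpa using hlast, ?_⟩
      simpa using List.cons_subset_cons _ hsub

lemma abs_sub_le_sum_consecutivePairs (g : α → ℝ) (a : α) (t : List α) :
    |g ((a :: t).getLast (List.cons_ne_nil a t)) - g a| ≤
      ((a :: t).consecutivePairs.map fun e => |g e.2 - g e.1|).sum := by
  induction t generalizing a with
  | nil => simp
  | cons y u ih =>
    rw [List.getLast_cons_cons, consecutivePairs_cons_cons, List.map_cons, List.sum_cons]
    calc _ ≤ |g ((y :: u).getLast (List.cons_ne_nil y u)) - g y| + |g y - g a| :=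
          abs_sub_le _ _ _
      _ ≤ _ := by linarith [ih y]

lemma sum_ite_mem_consecutivePairs [DecidableEq α] {M : Type*} [AddCommMonoid M]
    {E : Finset (α × α)} {L : List α} (hL : L.Nodup) (hE : ∀ e ∈ L.consecutivePairs, e ∈ E)
    (v : α × α → M) :
    ∑ e ∈ E, (if e ∈ L.consecutivePairs then v e else 0) = (L.consecutivePairs.map v).sum := by
  rw [← List.sum_toFinset v (nodup_consecutivePairs hL), ← Finset.sum_filter]
  congr 1
  ext e
  simpa using hE e

end Walks

section Flows

variable {α : Type*} [DecidableEq α] {F : Set α} {E : Finset (α × α)} {d : α × α → ℕ} {c c' : α → ℕ}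

def IsSupplyFlow (F : Set α) (E : Finset (α × α)) (d : α × α → ℕ) (c : α → ℕ) : Prop :=
  ∀ x ∉ F, c x + ∑ e ∈ E with e.2 = x, d e ≤ ∑ e ∈ E with e.1 = x, d e

lemma IsSupplyFlow.mono (h : IsSupplyFlow F E d c) (hc : c' ≤ c) : IsSupplyFlow F E d c' :=
  fun x hx => (Nat.add_le_add_right (hc x) _).trans (h x hx)

lemma IsSupplyFlow.push {x y : α}
    (h : IsSupplyFlow F E (d + Pi.single (x, y) 1) (c + Pi.single x 1)) (hxy : (x, y) ∈ E) :
    IsSupplyFlow F E d (c + Pi.single y 1) := by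
  intro z hz
  have := h z hz
  simp only [Pi.add_apply, Finset.sum_add_distrib, Finset.sum_pi_single', Finset.mem_filter]
    at this ⊢
  simp only [Pi.single_apply, hxy, true_and] at this ⊢
  split_ifs at this ⊢ <;> subst_vars <;> first | omega | contradiction

lemma IsSupplyFlow.exists_out_edge {x : α} (h : IsSupplyFlow F E d (c + Pi.single x 1))
    (hx : x ∉ F) : ∃ y, (x, y) ∈ E ∧ 1 ≤ d (x, y) := by
  have hout := h x hx
  simp only [Pi.add_apply, Pi.single_eq_same] at hout
  obtain ⟨e, he, hde⟩ :=
    Finset.exists_ne_zero_of_sum_ne_zero (by omega : ∑ e ∈ E with e.1 = x, d e ≠ 0)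
  obtain ⟨hE, rfl⟩ := Finset.mem_filter.1 he
  exact ⟨e.2, hE, Nat.one_le_iff_ne_zero.2 hde⟩

/-- A walk starting at `a` is encoded by the list `t` of its later vertices. -/
def IsWalkTo (E : Finset (α × α)) (F : Set α) (a : α) (t : List α) : Prop :=
  (a :: t).getLast (List.cons_ne_nil a t) ∈ F ∧ ∀ e ∈ (a :: t).consecutivePairs, e ∈ E

theorem IsSupplyFlow.exists_walk {x : α} (h : IsSupplyFlow F E d (c + Pi.single x 1)) :
    ∃ t d', IsWalkTo E F x t ∧ d = d' + (fun e => (x :: t).consecutivePairs.count e) ∧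
      IsSupplyFlow F E d' c := by
  induction hN : ∑ e ∈ E, d e using Nat.strong_induction_on generalizing d c x with
  | _ N ih =>
  by_cases hx : x ∈ F
  · exact ⟨[], d, ⟨hx, by simp⟩, by ext; simp, h.mono le_self_add⟩
  obtain ⟨y, hxy, hd⟩ := h.exists_out_edge hx
  set d₁ := d - Pi.single (x, y) 1
  have hd₁ : d = d₁ + Pi.single (x, y) 1 := by
    ext e
    by_cases he : e = (x, y) <;> simp [d₁, he]; omega
  have hN₁ : ∑ e ∈ E, d₁ e < N := by
    rw [← hN, hd₁]
    simp only [Pi.add_apply, Finset.sum_add_distrib, Finset.sum_pi_single', if_pos hxy]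
    omega
  rw [hd₁] at h
  obtain ⟨t, d', ⟨hlast, hsteps⟩, hd', hflow⟩ := ih _ hN₁ (h.push hxy) rfl
  refine ⟨y :: t, d', ⟨by simpa using hlast, ?_⟩, ?_, hflow⟩
  · simpa [hxy] using hsteps
  · rw [hd₁, hd']
    ext e
    simp only [Pi.add_apply, consecutivePairs_cons_cons, List.count_cons, Pi.single_apply,
      beq_iff_eq]
    by_cases he : e = (x, y) <;> simp [he, add_assoc, eq_comm]

theorem IsSupplyFlow.exists_walks {S : Finset α} (h : IsSupplyFlow F E d (∑ a ∈ S, Pi.single a 1)) :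
    ∃ P : α → List α, (∀ a ∈ S, IsWalkTo E F a (P a)) ∧
      ∀ e, ∑ a ∈ S, (a :: P a).consecutivePairs.count e ≤ d e := by
  induction S using Finset.induction_on generalizing d with
  | empty => exact ⟨fun _ => [], by simp, by simp⟩
  | @insert b S hb ih =>
    rw [Finset.sum_insert hb, add_comm] at h
    obtain ⟨t, d', hwalk, rfl, hflow⟩ := h.exists_walk
    obtain ⟨P, hP, hcount⟩ := ih hflow
    refine ⟨Function.update P b t, ?_, fun e => ?_⟩
    · intro a ha
      rcases Finset.mem_insert.1 ha with rfl | ha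
      · simpa using hwalk
      · simpa [ne_of_mem_of_not_mem ha hb] using hP a ha
    · rw [Finset.sum_insert hb, Function.update_self, Finset.sum_congr rfl fun a ha => by
        rw [Function.update_of_ne (ne_of_mem_of_not_mem ha hb)]]
      simp only [Pi.add_apply]
      have := hcount e
      omega

theorem IsSupplyFlow.exists_nodup_walks {S : Finset α}
    (h : IsSupplyFlow F E d (∑ a ∈ S, Pi.single a 1)) :
    ∃ P : α → List α, (∀ a ∈ S, IsWalkTo E F a (P a) ∧ (a :: P a).Nodup) ∧
      ∀ e, #{a ∈ S | e ∈ (a :: P a).consecutivePairs} ≤ d e := by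
  obtain ⟨P, hP, hcount⟩ := h.exists_walks
  choose Q hQ using fun a => exists_nodup_consecutivePairs_subset a (P a)
  refine ⟨Q, fun a ha => ⟨⟨?_, fun e he => (hP a ha).2 e ((hQ a).2.2 he)⟩, (hQ a).1⟩,
    fun e => le_trans ?_ (hcount e)⟩
  · rw [(hQ a).2.1]
    exact (hP a ha).1
  · rw [Finset.card_filter]
    refine Finset.sum_le_sum fun a _ => ?_
    split_ifs with he
    · exact List.count_pos_iff.2 ((hQ a).2.2 he)
    · exact Nat.zero_le _

end Flows

section Clamp

def clamp (a b t : ℝ) : ℝ := max a (min t b)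

variable {a b c : ℝ}

lemma clamp_mono (a b : ℝ) : Monotone (clamp a b) :=
  fun _ _ h => max_le_max le_rfl (min_le_min h le_rfl)

lemma abs_clamp_sub_clamp_le (a b u v : ℝ) : |clamp a b u - clamp a b v| ≤ |u - v| := by
  unfold clamp
  rw [max_comm a, max_comm a]
  refine (abs_max_sub_max_le_abs _ _ _).trans ?_
  simpa using abs_min_sub_min_le_max u b v b

lemma clamp_of_le {t : ℝ} (ht : t ≤ a) (hab : a ≤ b) : clamp a b t = a := by
  simp [clamp, ht, min_eq_left (ht.trans hab)]

lemma clamp_of_ge {t : ℝ} (ht : b ≤ t) (hab : a ≤ b) : clamp a b t = b := by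
  simp [clamp, ht, hab]

lemma clamp_add_clamp (hab : a ≤ b) (hbc : b ≤ c) (t : ℝ) :
    clamp a b t + clamp b c t = clamp a c t + b := by
  simp only [clamp, min_def, max_def]
  split_ifs <;> linarith

lemma sum_range_clamp_sub_clamp {s : ℕ → ℝ} (hs : Antitone s) (u v : ℝ) (n : ℕ) :
    ∑ j ∈ range n, (clamp (s (j + 1)) (s j) v - clamp (s (j + 1)) (s j) u) =
      clamp (s n) (s 0) v - clamp (s n) (s 0) u := by
  induction n with
  | zero => simp [clamp]
  | succ n ih =>
    have hn := hs (Nat.le_succ n)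
    have h0 := hs (Nat.zero_le n)
    rw [Finset.sum_range_succ, ih]
    linarith [clamp_add_clamp hn h0 u, clamp_add_clamp hn h0 v]

/-- The ramps `clamp (s (j + 1)) (s j)` rise on disjoint intervals, so their total variation
along any segment is at most its length. -/
lemma sum_abs_clamp_sub_clamp_le {s : ℕ → ℝ} (hs : Antitone s) (T : Finset ℕ) (u v : ℝ) :
    ∑ j ∈ T, |clamp (s (j + 1)) (s j) v - clamp (s (j + 1)) (s j) u| ≤ |v - u| := by
  wlog huv : u ≤ v generalizing u v
  · simpa only [abs_sub_comm] using this v u (le_of_not_ge huv)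
  obtain ⟨n, hn⟩ := Finset.exists_nat_subset_range T
  have hmono (j : ℕ) : 0 ≤ clamp (s (j + 1)) (s j) v - clamp (s (j + 1)) (s j) u :=
    sub_nonneg.2 (clamp_mono _ _ huv)
  calc ∑ j ∈ T, |clamp (s (j + 1)) (s j) v - clamp (s (j + 1)) (s j) u|
      ≤ ∑ j ∈ range n, (clamp (s (j + 1)) (s j) v - clamp (s (j + 1)) (s j) u) := by
        simp only [abs_of_nonneg (hmono _)]
        exact Finset.sum_le_sum_of_subset_of_nonneg hn fun j _ _ => hmono j
    _ ≤ |v - u| := by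
        rw [sum_range_clamp_sub_clamp hs]
        exact le_abs_self _ |>.trans (abs_clamp_sub_clamp_le _ _ _ _)

end Clamp

section DyadicSums

lemma sum_geometric_half_le_of_le (T : Finset ℕ) {j₀ : ℕ} (hT : ∀ j ∈ T, j₀ ≤ j) :
    ∑ j ∈ T, (1 / 2 : ℝ) ^ j ≤ 2 * (1 / 2) ^ j₀ := by
  obtain ⟨n, hn⟩ := Finset.exists_nat_subset_range T
  have hsub : T ⊆ Ico j₀ n := fun j hj => Finset.mem_Ico.2 ⟨hT j hj, Finset.mem_range.1 (hn hj)⟩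
  calc ∑ j ∈ T, (1 / 2 : ℝ) ^ j ≤ ∑ j ∈ Ico j₀ n, (1 / 2 : ℝ) ^ j :=
        Finset.sum_le_sum_of_subset_of_nonneg hsub fun _ _ _ => by positivity
    _ = (1 / 2) ^ j₀ * ∑ i ∈ range (n - j₀), (1 / 2 : ℝ) ^ i := by
        rw [Finset.sum_Ico_eq_sum_range, Finset.mul_sum]
        simp only [pow_add]
    _ ≤ (1 / 2) ^ j₀ * 2 := by gcongr; exact sum_geometric_two_le _
    _ = 2 * (1 / 2) ^ j₀ := mul_comm _ _

lemma sum_dyadic_le (T : Finset ℕ) {c D : ℝ} (hc : 0 ≤ c) (hD : 0 ≤ D) :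
    ∑ j ∈ T with c * (1 / 2) ^ j ≤ D, c * (1 / 2) ^ j ≤ 2 * D := by
  set T' := T.filter fun j => c * (1 / 2) ^ j ≤ D
  rcases T'.eq_empty_or_nonempty with hT' | hT'
  · simp [T', hT', hD]
  have hj₀ := (Finset.mem_filter.1 (T'.min'_mem hT')).2
  rw [← Finset.mul_sum]
  calc c * ∑ j ∈ T', (1 / 2 : ℝ) ^ j ≤ c * (2 * (1 / 2) ^ T'.min' hT') :=
        mul_le_mul_of_nonneg_left
          (sum_geometric_half_le_of_le T' fun j hj => T'.min'_le j hj) hc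
    _ ≤ 2 * D := by linarith

lemma sum_pow_dyadic_le (T : Finset ℕ) {c D : ℝ} (hc : 0 ≤ c) (hD : 0 ≤ D) {n : ℕ}
    (hn : 1 ≤ n) : ∑ j ∈ T with c * (1 / 2) ^ j ≤ D, (c * (1 / 2) ^ j) ^ n ≤ 2 * D ^ n := by
  calc ∑ j ∈ T with c * (1 / 2) ^ j ≤ D, (c * (1 / 2) ^ j) ^ n
      ≤ ∑ j ∈ T with c * (1 / 2) ^ j ≤ D, D ^ (n - 1) * (c * (1 / 2) ^ j) := by
        refine Finset.sum_le_sum fun j hj => ?_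
        rw [← Nat.sub_add_cancel hn, pow_succ, Nat.add_sub_cancel]
        gcongr
        exact (Finset.mem_filter.1 hj).2
    _ ≤ D ^ (n - 1) * (2 * D) := by
        rw [← Finset.mul_sum]
        gcongr
        exact sum_dyadic_le T hc hD
    _ = 2 * D ^ n := by
        rw [mul_left_comm, ← pow_succ, Nat.sub_add_cancel hn]

/-- Split `T` at `c / 2 ^ j = δ ^ (1 / m)`. -/
lemma sum_inv_mul_le {m : ℕ} (hm : 2 ≤ m) (T : Finset ℕ) {c B δ ℓ : ℝ} (hc : 0 < c)
    (hB : 0 ≤ B) (hδ : 0 < δ) (hℓ : 0 ≤ ℓ) (x : ℕ → ℝ) (hx : ∀ j ∈ T, 0 ≤ x j)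
    (hsum : ∑ j ∈ T, x j ≤ δ * ℓ) (hcap : ∀ j ∈ T, x j ≤ B * (c * (1 / 2) ^ j) ^ m * ℓ) :
    ∑ j ∈ T, (c * (1 / 2) ^ j)⁻¹ * x j ≤ (2 * B + 1) * δ ^ (1 - 1 / (m : ℝ)) * ℓ := by
  set t : ℕ → ℝ := fun j => c * (1 / 2) ^ j
  set D := δ ^ (1 / (m : ℝ))
  have hD : 0 < D := by positivity
  have hDm : D ^ m = δ := by
    rw [← Real.rpow_natCast, ← Real.rpow_mul hδ.le, one_div_mul_cancel (by positivity),
      Real.rpow_one]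
  have hα : D ^ (m - 1) = δ ^ (1 - 1 / (m : ℝ)) := by
    rw [← hDm, ← Real.rpow_natCast, ← Real.rpow_natCast, ← Real.rpow_mul hD.le,
      Nat.cast_sub (by omega), Nat.cast_one]
    congr 1
    field_simp
  have hDinv : D⁻¹ * δ = D ^ (m - 1) := by
    rw [← hDm, inv_mul_eq_div, div_eq_iff hD.ne', ← pow_succ, Nat.sub_add_cancel (by omega)]
  have hfine : ∑ j ∈ T with t j ≤ D, (t j)⁻¹ * x j ≤ B * ℓ * (2 * D ^ (m - 1)) := by
    calc ∑ j ∈ T with t j ≤ D, (t j)⁻¹ * x j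
        ≤ ∑ j ∈ T with t j ≤ D, B * ℓ * t j ^ (m - 1) := by
          refine Finset.sum_le_sum fun j hj => ?_
          have htj : 0 < t j := by positivity
          rw [inv_mul_le_iff₀ htj]
          refine (hcap j (Finset.mem_filter.1 hj).1).trans_eq ?_
          rw [← Nat.sub_add_cancel (show 1 ≤ m by omega), pow_succ, Nat.add_sub_cancel]
          ring
      _ ≤ B * ℓ * (2 * D ^ (m - 1)) := by
          rw [← Finset.mul_sum]
          gcongr
          exact sum_pow_dyadic_le T hc.le hD.le (by omega)
  have hcoarse : ∑ j ∈ T with ¬t j ≤ D, (t j)⁻¹ * x j ≤ D⁻¹ * (δ * ℓ) := by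
    calc ∑ j ∈ T with ¬t j ≤ D, (t j)⁻¹ * x j ≤ ∑ j ∈ T with ¬t j ≤ D, D⁻¹ * x j := by
          refine Finset.sum_le_sum fun j hj => ?_
          obtain ⟨hjT, hjD⟩ := Finset.mem_filter.1 hj
          exact mul_le_mul_of_nonneg_right (inv_anti₀ hD (not_le.1 hjD).le) (hx j hjT)
      _ ≤ D⁻¹ * (δ * ℓ) := by
          rw [← Finset.mul_sum]
          gcongr
          exact (Finset.sum_le_sum_of_subset_of_nonneg (Finset.filter_subset _ T)
            fun j hj _ => hx j hj).trans hsum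
  rw [← Finset.sum_filter_add_sum_filter_not T fun j => t j ≤ D, ← hα]
  rw [← mul_assoc, hDinv] at hcoarse
  linarith

end DyadicSums

section Crossings

def ramp (j : ℕ) : ℝ → ℝ := clamp ((1 / 2) ^ (j + 1)) ((1 / 2) ^ j)

lemma antitone_half_pow : Antitone fun j : ℕ => (1 / 2 : ℝ) ^ j :=
  pow_right_anti₀ (by norm_num) (by norm_num)

lemma half_pow_succ_le (j : ℕ) : (1 / 2 : ℝ) ^ (j + 1) ≤ (1 / 2) ^ j :=
  antitone_half_pow (Nat.le_succ j)

variable {V : Type*} [NormedAddCommGroup V]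

lemma abs_ramp_sub_ramp_le (j : ℕ) (a u v : V) : |ramp j ‖v - a‖ - ramp j ‖u - a‖| ≤ ‖v - u‖ :=
  (abs_clamp_sub_clamp_le _ _ _ _).trans <| by
    simpa using abs_norm_sub_norm_le (v - a) (u - a)

lemma sum_abs_ramp_sub_ramp_le (T : Finset ℕ) (a u v : V) :
    ∑ j ∈ T, |ramp j ‖v - a‖ - ramp j ‖u - a‖| ≤ ‖v - u‖ :=
  (sum_abs_clamp_sub_clamp_le antitone_half_pow T _ _).trans <| by
    simpa using abs_norm_sub_norm_le (v - a) (u - a)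

lemma ramp_sub_ramp_eq_zero {j : ℕ} {a u v : V} (hu : (1 / 2) ^ j ≤ ‖u - a‖)
    (hv : (1 / 2) ^ j ≤ ‖v - a‖) : ramp j ‖v - a‖ - ramp j ‖u - a‖ = 0 := by
  rw [ramp, clamp_of_ge hu (half_pow_succ_le j), clamp_of_ge hv (half_pow_succ_le j), sub_self]

/-- `ramp j ‖· - a‖` is `2⁻ʲ⁻¹` at `a` and `2⁻ʲ` at the far end of the walk. -/
lemma half_pow_succ_le_sum_ramp [DecidableEq V] {E : Finset (V × V)} {a : V} {t : List V}
    (hE : ∀ e ∈ (a :: t).consecutivePairs, e ∈ E) (hnd : (a :: t).Nodup) {j : ℕ}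
    (hfar : (1 / 2) ^ j ≤ ‖(a :: t).getLast (List.cons_ne_nil a t) - a‖) :
    (1 / 2) ^ (j + 1) ≤ ∑ e ∈ E, if e ∈ (a :: t).consecutivePairs then
      |ramp j ‖e.2 - a‖ - ramp j ‖e.1 - a‖| else 0 := by
  rw [sum_ite_mem_consecutivePairs hnd hE]
  refine le_trans ?_ (abs_sub_le_sum_consecutivePairs (fun v => ramp j ‖v - a‖) a t)
  rw [sub_self, norm_zero, ramp, clamp_of_ge hfar (half_pow_succ_le j),
    clamp_of_le (by positivity) (half_pow_succ_le j), pow_succ]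
  rw [abs_of_nonneg (by linarith [half_pow_succ_le j, pow_succ (1 / 2 : ℝ) j])]
  linarith

end Crossings

section Flux

variable {V : Type*} [NormedAddCommGroup V] [DecidableEq V] (C : Finset V) (P : V → List V)

def rampFlux (j : ℕ) (e : V × V) : ℝ :=
  ∑ a ∈ C, if e ∈ (a :: P a).consecutivePairs then |ramp j ‖e.2 - a‖ - ramp j ‖e.1 - a‖| else 0

variable {C P}

lemma rampFlux_nonneg (j : ℕ) (e : V × V) : 0 ≤ rampFlux C P j e :=
  Finset.sum_nonneg fun _ _ => by split_ifs <;> positivity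

lemma card_mul_le_sum_rampFlux {E : Finset (V × V)}
    (hP : ∀ a ∈ C, (∀ e ∈ (a :: P a).consecutivePairs, e ∈ E) ∧ (a :: P a).Nodup ∧
      1 / 4 ≤ ‖(a :: P a).getLast (List.cons_ne_nil a (P a)) - a‖) {j : ℕ} (hj : 2 ≤ j) :
    #C * (1 / 2 : ℝ) ^ (j + 1) ≤ ∑ e ∈ E, rampFlux C P j e := by
  simp only [rampFlux]
  rw [Finset.sum_comm, ← nsmul_eq_mul, ← Finset.sum_const]
  refine Finset.sum_le_sum fun a ha => ?_
  obtain ⟨hE, hnd, hfar⟩ := hP a ha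
  refine half_pow_succ_le_sum_ramp hE hnd (le_trans ?_ hfar)
  calc (1 / 2 : ℝ) ^ j ≤ (1 / 2) ^ 2 := antitone_half_pow hj
    _ = 1 / 4 := by norm_num

lemma sum_rampFlux_le (T : Finset ℕ) (e : V × V) :
    ∑ j ∈ T, rampFlux C P j e ≤ #{a ∈ C | e ∈ (a :: P a).consecutivePairs} * ‖e.2 - e.1‖ := by
  simp only [rampFlux]
  rw [Finset.sum_comm, Finset.card_filter, Nat.cast_sum, Finset.sum_mul]
  refine Finset.sum_le_sum fun a _ => ?_
  split_ifs
  · simpa using sum_abs_ramp_sub_ramp_le T a e.1 e.2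
  · simp

/-- Only centres within `2⁻ʲ` of an endpoint of `e` see `ramp j` vary along `e`. -/
lemma rampFlux_le (j : ℕ) (e : V × V) :
    rampFlux C P j e ≤
      (#{a ∈ C | ‖e.1 - a‖ < (1 / 2) ^ j} + #{a ∈ C | ‖e.2 - a‖ < (1 / 2) ^ j}) * ‖e.2 - e.1‖ := by
  calc rampFlux C P j e
      ≤ ∑ a ∈ C, if ‖e.1 - a‖ < (1 / 2) ^ j ∨ ‖e.2 - a‖ < (1 / 2) ^ j then ‖e.2 - e.1‖ else 0 := by
        refine Finset.sum_le_sum fun a _ => ?_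
        by_cases hnear : ‖e.1 - a‖ < (1 / 2) ^ j ∨ ‖e.2 - a‖ < (1 / 2) ^ j
        · rw [if_pos hnear]
          split_ifs
          · exact abs_ramp_sub_ramp_le j a e.1 e.2
          · exact norm_nonneg _
        · have hzero := ramp_sub_ramp_eq_zero (not_lt.1 (not_or.1 hnear).1)
            (not_lt.1 (not_or.1 hnear).2)
          rw [if_neg hnear]
          split_ifs <;> simp [hzero]
    _ = #{a ∈ C | ‖e.1 - a‖ < (1 / 2) ^ j ∨ ‖e.2 - a‖ < (1 / 2) ^ j} * ‖e.2 - e.1‖ := by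
        rw [← Finset.sum_filter, Finset.sum_const, nsmul_eq_mul]
    _ ≤ _ := by
        gcongr
        rw [Finset.filter_or]
        exact_mod_cast Finset.card_union_le _ _

theorem card_mul_card_le_cost {m : ℕ} (hm : 2 ≤ m) {E : Finset (V × V)} {d : V × V → ℕ}
    (hd : ∀ e ∈ E, 1 ≤ d e)
    (hP : ∀ a ∈ C, (∀ e ∈ (a :: P a).consecutivePairs, e ∈ E) ∧ (a :: P a).Nodup ∧
      1 / 4 ≤ ‖(a :: P a).getLast (List.cons_ne_nil a (P a)) - a‖)
    (hcount : ∀ e, #{a ∈ C | e ∈ (a :: P a).consecutivePairs} ≤ d e)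
    {T : Finset ℕ} (hT : ∀ j ∈ T, 2 ≤ j) {k B : ℝ} (hk : 0 < k) (hB : 0 ≤ B)
    (hball : ∀ p : V, ∀ j ∈ T, (#{a ∈ C | ‖p - a‖ < (1 / 2) ^ j} : ℝ) ≤ B * (k * (1 / 2) ^ j) ^ m) :
    #C * #T / (2 * k) ≤ (4 * B + 1) * ∑ e ∈ E, (d e : ℝ) ^ (1 - 1 / (m : ℝ)) * ‖e.2 - e.1‖ := by
  have hscale (j : ℕ) : (k * (1 / 2) ^ j)⁻¹ * (#C * (1 / 2 : ℝ) ^ (j + 1)) = #C / (2 * k) := by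
    field_simp
    ring
  calc (#C * #T / (2 * k) : ℝ)
      = ∑ j ∈ T, (k * (1 / 2) ^ j)⁻¹ * (#C * (1 / 2 : ℝ) ^ (j + 1)) := by
        simp only [hscale, Finset.sum_const, nsmul_eq_mul]
        ring
    _ ≤ ∑ j ∈ T, (k * (1 / 2) ^ j)⁻¹ * ∑ e ∈ E, rampFlux C P j e := by
        gcongr with j hj
        exact card_mul_le_sum_rampFlux hP (hT j hj)
    _ = ∑ e ∈ E, ∑ j ∈ T, (k * (1 / 2) ^ j)⁻¹ * rampFlux C P j e := by
        simp only [Finset.mul_sum]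
        exact Finset.sum_comm
    _ ≤ ∑ e ∈ E, (2 * (2 * B) + 1) * (d e : ℝ) ^ (1 - 1 / (m : ℝ)) * ‖e.2 - e.1‖ := by
        refine Finset.sum_le_sum fun e he => sum_inv_mul_le hm T hk (by positivity)
          (by exact_mod_cast hd e he) (norm_nonneg _) _ (fun j _ => rampFlux_nonneg j e) ?_ ?_
        · refine (sum_rampFlux_le T e).trans ?_
          gcongr
          exact_mod_cast hcount e
        · intro j hj
          refine (rampFlux_le j e).trans ?_
          gcongr
          linarith [hball e.1 j hj, hball e.2 j hj]
    _ = (4 * B + 1) * ∑ e ∈ E, (d e : ℝ) ^ (1 - 1 / (m : ℝ)) * ‖e.2 - e.1‖ := by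
        rw [Finset.mul_sum]
        ring_nf

end Flux

section Grid

variable {m : ℕ}

def gridPoint (k : ℕ) (I : Fin m → ℕ) : Pt m :=
  (WithLp.equiv 2 (Fin m → ℝ)).symm fun j => (I j : ℝ) / k

lemma gridPoint_apply (k : ℕ) (I : Fin m → ℕ) (j : Fin m) : gridPoint k I j = I j / k := rfl

lemma gridPoint_injective {k : ℕ} (hk : k ≠ 0) : Function.Injective (gridPoint (m := m) k) := by
  intro I I' h
  funext j
  have := congrArg (· j) h
  simp only [gridPoint_apply] at this
  exact_mod_cast (div_left_inj' (by exact_mod_cast hk)).1 this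

lemma abs_apply_sub_le_norm (a b : Pt m) (j : Fin m) : |a j - b j| ≤ ‖a - b‖ := by
  simpa using PiLp.norm_apply_le (a - b) j

lemma card_filter_abs_div_sub_lt_le (T : Finset ℕ) {k : ℕ} {c s : ℝ} (hs : 1 ≤ 2 * (k * s)) :
    (#{n ∈ T | |((n : ℕ) : ℝ) / k - c| < s} : ℝ) ≤ 4 * (k * s) := by
  set U := T.filter fun n : ℕ => |(n : ℝ) / k - c| < s
  rcases U.eq_empty_or_nonempty with hU | hU
  · rw [hU, Finset.card_empty, Nat.cast_zero]
    linarith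
  have hk : (0 : ℝ) < k := Nat.cast_pos.2 <| Nat.pos_of_ne_zero fun h => by norm_num [h] at hs
  have hmin := (Finset.mem_filter.1 (U.min'_mem hU)).2
  have hmax := (Finset.mem_filter.1 (U.max'_mem hU)).2
  have hspread : (U.max' hU : ℝ) - U.min' hU < 2 * (k * s) := by
    rw [abs_lt] at hmin hmax
    have : (U.max' hU : ℝ) / k - U.min' hU / k < 2 * s := by linarith
    rw [← sub_div, div_lt_iff₀ hk] at this
    linarith
  have hcard : #U ≤ U.max' hU + 1 - U.min' hU :=
    (Finset.card_le_card fun n hn => Finset.mem_Icc.2 ⟨U.min'_le n hn, U.le_max' n hn⟩).trans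
      (Nat.card_Icc _ _).le
  have hle : U.min' hU ≤ U.max' hU := U.min'_le _ (U.max'_mem hU)
  calc (#U : ℝ) ≤ ((U.max' hU + 1 - U.min' hU : ℕ) : ℝ) := by exact_mod_cast hcard
    _ = (U.max' hU : ℝ) - U.min' hU + 1 := by
        rw [Nat.cast_sub (by omega)]; push_cast; ring
    _ ≤ 4 * (k * s) := by linarith

lemma card_filter_norm_sub_lt_le (T : Finset ℕ) {k : ℕ} (p : Pt m) {s : ℝ}
    (hs : 1 ≤ 2 * (k * s)) :
    (#{a ∈ (Fintype.piFinset fun _ => T).image (gridPoint k) | ‖p - a‖ < s} : ℝ) ≤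
      4 ^ m * (k * s) ^ m := by
  set U : Fin m → Finset ℕ := fun j => T.filter fun n : ℕ => |(n : ℝ) / k - p j| < s
  have hsub : {a ∈ (Fintype.piFinset fun _ => T).image (gridPoint k) | ‖p - a‖ < s} ⊆
      (Fintype.piFinset U).image (gridPoint k) := by
    intro a ha
    obtain ⟨ha, hnear⟩ := Finset.mem_filter.1 ha
    obtain ⟨I, hI, rfl⟩ := Finset.mem_image.1 ha
    refine Finset.mem_image_of_mem _ (Fintype.mem_piFinset.2 fun j => Finset.mem_filter.2
      ⟨Fintype.mem_piFinset.1 hI j, ?_⟩)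
    rw [← gridPoint_apply k I j, abs_sub_comm]
    exact (abs_apply_sub_le_norm _ _ j).trans_lt hnear
  calc (#{a ∈ (Fintype.piFinset fun _ => T).image (gridPoint k) | ‖p - a‖ < s} : ℝ)
      ≤ ∏ j, (#(U j) : ℝ) := by
        rw [← Nat.cast_prod, ← Fintype.card_piFinset]
        exact_mod_cast (Finset.card_le_card hsub).trans Finset.card_image_le
    _ ≤ ∏ _j : Fin m, 4 * (k * s) := by
        gcongr with j
        exact card_filter_abs_div_sub_lt_le T hs
    _ = 4 ^ m * (k * s) ^ m := by simp [mul_pow]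

/-- The grid points with all coordinates in `[1/4, 3/4]`: `(k + 3) / 4 = ⌈k/4⌉` and
`3 * k / 4 = ⌊3k/4⌋` in `ℕ`. -/
def centralGrid (m k : ℕ) : Finset (Pt m) :=
  (Fintype.piFinset fun _ => Icc ((k + 3) / 4) (3 * k / 4)).image (gridPoint k)

lemma centralGrid_subset_gridA {k : ℕ} (hk : k ≠ 0) : centralGrid m k ⊆ gridA m k :=
  Finset.image_subset_image <| Fintype.piFinset_subset _ _ fun _ =>
    Finset.Icc_subset_Icc (by omega) (by omega)

lemma mem_Icc_of_mem_centralGrid {k : ℕ} (hk : k ≠ 0) {a : Pt m} (ha : a ∈ centralGrid m k)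
    (j : Fin m) : a j ∈ Set.Icc (1 / 4 : ℝ) (3 / 4) := by
  obtain ⟨I, hI, rfl⟩ := Finset.mem_image.1 ha
  obtain ⟨hlo, hhi⟩ := Finset.mem_Icc.1 (Fintype.mem_piFinset.1 hI j)
  have hk' : (0 : ℝ) < k := by positivity
  rw [gridPoint_apply, Set.mem_Icc, le_div_iff₀ hk', div_le_iff₀ hk']
  constructor
  · have : k ≤ 4 * I j := by omega
    have : (k : ℝ) ≤ 4 * I j := by exact_mod_cast this
    linarith
  · have : 4 * I j ≤ 3 * k := by omega
    have : 4 * (I j : ℝ) ≤ 3 * k := by exact_mod_cast this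
    linarith

lemma pow_le_card_centralGrid {k : ℕ} (hk : 2 ≤ k) : ((k : ℝ) / 4) ^ m ≤ #(centralGrid m k) := by
  rw [centralGrid, Finset.card_image_of_injective _ (gridPoint_injective (by omega)),
    Fintype.card_piFinset, Finset.prod_const, Finset.card_univ, Fintype.card_fin, Nat.card_Icc,
    Nat.cast_pow]
  gcongr
  have : k ≤ 4 * (3 * k / 4 + 1 - (k + 3) / 4) := by omega
  have : (k : ℝ) ≤ 4 * ((3 * k / 4 + 1 - (k + 3) / 4 : ℕ) : ℝ) := by exact_mod_cast this
  linarith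

lemma isOpen_unitCube : IsOpen (unitCube m) := by
  simp only [unitCube, Set.ofPred_forall]
  exact isOpen_iInter_of_finite fun j => isOpen_Ioo.preimage (by fun_prop)

lemma quarter_le_norm_sub_of_mem_centralGrid {k : ℕ} (hk : k ≠ 0) {a b : Pt m}
    (ha : a ∈ centralGrid m k) (hb : b ∈ frontier (unitCube m)) : 1 / 4 ≤ ‖b - a‖ := by
  have hb : b ∉ unitCube m := fun hb' =>
    (Set.eq_empty_iff_forall_notMem.1 isOpen_unitCube.inter_frontier_eq) b ⟨hb', hb⟩
  obtain ⟨j, hj⟩ : ∃ j, b j ∉ Set.Ioo (0 : ℝ) 1 := by simpa [unitCube] using hb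
  obtain ⟨hlo, hhi⟩ := mem_Icc_of_mem_centralGrid hk ha j
  refine le_trans ?_ (abs_apply_sub_le_norm b a j)
  rw [Set.mem_Ioo, not_and_or, not_lt, not_lt] at hj
  rcases hj with hj | hj
  · rw [abs_of_nonpos (by linarith)]; linarith
  · rw [abs_of_nonneg (by linarith)]; linarith

end Grid

lemma log_le_two_mul_natLog_two {k : ℕ} (hk : 2 ≤ k) : Real.log k ≤ 2 * Nat.log 2 k := by
  have hJ : 1 ≤ Nat.log 2 k := Nat.le_log_of_pow_le (by norm_num) (by simpa using hk)
  have hk' : (k : ℝ) < 2 ^ (Nat.log 2 k + 1) := by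
    exact_mod_cast Nat.lt_pow_succ_log_self (by norm_num) k
  have hlog2 : Real.log 2 ≤ 1 := by linarith [Real.log_two_lt_d9]
  calc Real.log k ≤ Real.log (2 ^ (Nat.log 2 k + 1)) := Real.log_le_log (by positivity) hk'.le
    _ = (Nat.log 2 k + 1) * Real.log 2 := by rw [Real.log_pow]; push_cast; ring
    _ ≤ (Nat.log 2 k + 1) * 1 := by gcongr
    _ ≤ 2 * Nat.log 2 k := by
        have : (1 : ℝ) ≤ Nat.log 2 k := by exact_mod_cast hJ
        linarith

lemma one_le_two_mul_mul_half_pow {k j : ℕ} (hk : k ≠ 0) (hj : j ≤ Nat.log 2 k + 1) :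
    1 ≤ 2 * (k * (1 / 2 : ℝ) ^ j) := by
  have hpow : (2 : ℝ) ^ j ≤ 2 * k := by
    calc (2 : ℝ) ^ j ≤ 2 ^ (Nat.log 2 k + 1) := pow_le_pow_right₀ (by norm_num) hj
      _ = 2 * 2 ^ Nat.log 2 k := pow_succ' _ _
      _ ≤ 2 * k := by gcongr; exact_mod_cast Nat.pow_log_le_self 2 hk
  rw [div_pow, one_pow, mul_one_div, ← mul_div_assoc, le_div_iff₀ (by positivity)]
  linarith

lemma rpow_neg_mul_pow_sub_one_eq_one {k : ℝ} (hk : 0 < k) {m : ℕ} (hm : 1 ≤ m) :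
    k ^ (-((m : ℝ) * (1 - 1 / (m : ℝ)))) * k ^ (m - 1) = 1 := by
  have : (m : ℝ) * (1 - 1 / (m : ℝ)) = ((m - 1 : ℕ) : ℝ) := by
    rw [Nat.cast_sub hm]
    field_simp
    ring
  rw [this, Real.rpow_neg hk.le, Real.rpow_natCast, inv_mul_cancel₀ (by positivity)]

end BranchedTransport

namespace BrGraph

open BranchedTransport Finset

variable {m : ℕ} {G : BrGraph m}

lemma IsConn.isSupplyFlow {A : Finset (Pt m)} {Ω : Set (Pt m)} (hG : G.IsConn A Ω) :
    IsSupplyFlow (frontier Ω) G.E G.d fun x => if x ∈ A then 1 else 0 := by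
  obtain ⟨hAV, -, hEV, -, -, hbal⟩ := hG
  intro x hx
  by_cases hxV : x ∈ G.V
  · rw [hbal x hxV hx, add_comm]
  · have hin : G.E.filter (fun e => e.2 = x) = ∅ :=
      Finset.filter_eq_empty_iff.2 fun e he h => hxV (h ▸ (hEV e he).2.1)
    have hout : G.E.filter (fun e => e.1 = x) = ∅ :=
      Finset.filter_eq_empty_iff.2 fun e he h => hxV (h ▸ (hEV e he).1)
    have hA : x ∉ A := fun h => hxV (hAV h)
    simp [hin, hout, hA]

theorem IsConn.pow_mul_log_le_cost (hm : 2 ≤ m) {k : ℕ} (hk : 2 ≤ k)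
    (hG : G.IsConn (gridA m k) (unitCube m)) :
    (4 ^ (m + 1) * (4 ^ (m + 1) + 1) : ℝ)⁻¹ * k ^ (m - 1) * Real.log k ≤
      G.cost (1 - 1 / (m : ℝ)) := by
  have hsupply : IsSupplyFlow (frontier (unitCube m)) G.E G.d
      (∑ a ∈ centralGrid m k, Pi.single a 1) := hG.isSupplyFlow.mono fun x => by
    rw [Finset.sum_apply, Finset.sum_pi_single]
    split_ifs with h <;> simp_all [centralGrid_subset_gridA (by omega) h]
  obtain ⟨P, hP, hcount⟩ := hsupply.exists_nodup_walks
  have hd : ∀ e ∈ G.E, 1 ≤ G.d e := hG.2.2.2.2.1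
  have key := card_mul_card_le_cost (T := Icc 2 (Nat.log 2 k + 1)) (k := k) (B := 4 ^ m) hm hd
    (fun a ha => ⟨(hP a ha).1.2, (hP a ha).2,
      quarter_le_norm_sub_of_mem_centralGrid (by omega) ha (hP a ha).1.1⟩)
    hcount (fun j hj => (Finset.mem_Icc.1 hj).1) (by positivity) (by positivity)
    fun p j hj => (card_filter_norm_sub_lt_le _ p
      (one_le_two_mul_mul_half_pow (by omega) (Finset.mem_Icc.1 hj).2)).trans_eq (by ring)
  rw [Nat.card_Icc, show Nat.log 2 k + 1 + 1 - 2 = Nat.log 2 k by omega] at key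
  have hkm : ((k : ℝ) / 4) ^ m = k ^ (m - 1) * k / 4 ^ m := by
    rw [div_pow, ← pow_succ, Nat.sub_add_cancel (by omega)]
  calc (4 ^ (m + 1) * (4 ^ (m + 1) + 1) : ℝ)⁻¹ * k ^ (m - 1) * Real.log k
      ≤ (4 ^ (m + 1) * (4 ^ (m + 1) + 1) : ℝ)⁻¹ * k ^ (m - 1) * (2 * Nat.log 2 k) := by
        gcongr
        exact log_le_two_mul_natLog_two hk
    _ = ((k : ℝ) / 4) ^ m * Nat.log 2 k / (2 * k) / (4 * 4 ^ m + 1) := by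
        rw [hkm]; field_simp; ring
    _ ≤ #(centralGrid m k) * Nat.log 2 k / (2 * k) / (4 * 4 ^ m + 1) := by
        gcongr
        exact pow_le_card_centralGrid hk
    _ ≤ G.cost (1 - 1 / (m : ℝ)) := by
        rw [div_le_iff₀ (by positivity), cost]
        linarith

end BrGraph

/-- For `m ≥ 2` and the critical exponent `α_m = 1 − 1/m`, there is a constant `C_m > 0`
such that for every integer `k ≥ 2`: `Λ_m^{α_m}(k) ≥ C_m · k^{m−1} · log k`, equivalently
`Ξ_m^{α_m}(k) ≥ C_m · log k`. -/
theorem statement15 (m : ℕ) (hm : 2 ≤ m) :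
    ∃ C : ℝ, 0 < C ∧ ∀ k : ℕ, 2 ≤ k →
      ENNReal.ofReal (C * (k : ℝ) ^ (m - 1) * Real.log k) ≤ LamGrid m (1 - 1 / (m : ℝ)) k ∧
      ENNReal.ofReal (C * Real.log k) ≤ XiGrid m (1 - 1 / (m : ℝ)) k := by
  refine ⟨(4 ^ (m + 1) * (4 ^ (m + 1) + 1))⁻¹, by positivity, fun k hk => ?_⟩
  set C : ℝ := (4 ^ (m + 1) * (4 ^ (m + 1) + 1))⁻¹
  have hLam : ENNReal.ofReal (C * (k : ℝ) ^ (m - 1) * Real.log k) ≤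
      LamGrid m (1 - 1 / (m : ℝ)) k :=
    le_iInf₂ fun G hG => ENNReal.ofReal_le_ofReal (hG.pow_mul_log_le_cost hm hk)
  have hcrit := BranchedTransport.rpow_neg_mul_pow_sub_one_eq_one
    (show (0 : ℝ) < k by positivity) (show 1 ≤ m by omega)
  refine ⟨hLam, ?_⟩
  calc ENNReal.ofReal (C * Real.log k)
      = ENNReal.ofReal ((k : ℝ) ^ (-((m : ℝ) * (1 - 1 / (m : ℝ))))) *
          ENNReal.ofReal (C * (k : ℝ) ^ (m - 1) * Real.log k) := by
        rw [← ENNReal.ofReal_mul (by positivity)]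
        congr 1
        linear_combination -C * Real.log k * hcrit
    _ ≤ XiGrid m (1 - 1 / (m : ℝ)) k := by unfold XiGrid; gcongr

end
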